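/- For all real numbers c > 0 and y > 0, all integers n ≥ 2 and all integers k, ν ≥ 0, the following integral identity holds: ∫₀^∞ p_{k,ν}^n(c·(y + r)) · r^{n−1} dr = ((n−1)! / c^n) · p_{k+n,ν}^n(c·y). -/

import Mathlib

noncomputable section

open Set MeasureTheory

lemma aux_rpow_exp {a b : ℝ} (ha : -1 < a) (hb : 0 < b) :
    IntegrableOn (fun x : ℝ => x ^ a * Real.exp (-(b * x))) (Ioi 0) := by
  have h := integrableOn_rpow_mul_exp_neg_mul_rpow (p := 1) ha one_pos hb
  refine h.congr_fun (fun x hx => ?_) measurableSet_Ioi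
  beta_reduce; rw [Real.rpow_one, neg_mul]

lemma aux_kernel {A B t : ℝ} (hA : 0 ≤ A) (ht : 0 < t) :
    IntegrableOn (fun s : ℝ => s ^ A * (1 + s) ^ B * Real.exp (-(s + 1) * t)) (Ioi 0) := by
  set m : ℝ := max B 0 with hm
  have hm0 : 0 ≤ m := le_max_right _ _
  have hBm : B ≤ m := le_max_left _ _
  have hg : IntegrableOn (fun s : ℝ =>
      Real.exp (-t) * 2 ^ m * (s ^ A * Real.exp (-(t * s)) + s ^ (A + m) * Real.exp (-(t * s))))
      (Ioi 0) := by
    exact ((aux_rpow_exp (by linarith) ht).add (aux_rpow_exp (by linarith) ht)).const_mul _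
  refine hg.mono' (Measurable.aestronglyMeasurable (by fun_prop)) ?_
  filter_upwards [ae_restrict_mem measurableSet_Ioi] with s hs
  have hs0 : 0 < s := hs
  have h1s : (1 : ℝ) ≤ 1 + s := by linarith
  have hB : (1 + s) ^ B ≤ (1 + s) ^ m := Real.rpow_le_rpow_of_exponent_le h1s hBm
  have h2 : (1 + s) ^ m ≤ 2 ^ m * (1 + s ^ m) := by
    rcases le_total s 1 with h | h
    · calc (1 + s) ^ m ≤ (2 : ℝ) ^ m := Real.rpow_le_rpow (by linarith) (by linarith) hm0
        _ ≤ 2 ^ m * (1 + s ^ m) := by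
            have : (0:ℝ) ≤ s ^ m := Real.rpow_nonneg hs0.le m
            nlinarith [Real.rpow_nonneg (show (0:ℝ) ≤ 2 by norm_num) m]
    · calc (1 + s) ^ m ≤ (2 * s) ^ m := Real.rpow_le_rpow (by linarith) (by linarith) hm0
        _ = 2 ^ m * s ^ m := Real.mul_rpow (by norm_num) hs0.le
        _ ≤ 2 ^ m * (1 + s ^ m) := by
            have : (0:ℝ) ≤ (2:ℝ) ^ m := Real.rpow_nonneg (by norm_num) m
            nlinarith
  have hexp : Real.exp (-(s + 1) * t) = Real.exp (-t) * Real.exp (-(t * s)) := by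
    rw [← Real.exp_add]; ring_nf
  rw [Real.norm_eq_abs, abs_of_nonneg (by positivity)]
  calc s ^ A * (1 + s) ^ B * Real.exp (-(s + 1) * t)
      ≤ s ^ A * (2 ^ m * (1 + s ^ m)) * Real.exp (-(s + 1) * t) := by
        have := hB.trans h2
        have h3 : (0:ℝ) ≤ s ^ A := Real.rpow_nonneg hs0.le A
        nlinarith [Real.exp_pos (-(s + 1) * t), mul_le_mul_of_nonneg_left this h3]
    _ = Real.exp (-t) * 2 ^ m * (s ^ A * Real.exp (-(t * s)) + s ^ (A + m) * Real.exp (-(t * s))) := by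
        rw [hexp, Real.rpow_add hs0]; ring

lemma aux_gamma (n : ℕ) (hn : 1 ≤ n) {a : ℝ} (ha : 0 < a) :
    ∫ r in Ioi (0 : ℝ), Real.exp (-(a * r)) * r ^ ((n : ℝ) - 1)
      = ((n - 1).factorial : ℝ) / a ^ n := by
  have hn0 : (0 : ℝ) < (n : ℝ) := by exact_mod_cast hn
  have h := Real.integral_rpow_mul_exp_neg_mul_Ioi hn0 ha
  rw [show (∫ r in Ioi (0:ℝ), Real.exp (-(a * r)) * r ^ ((n : ℝ) - 1))
      = ∫ t in Ioi (0:ℝ), t ^ ((n : ℝ) - 1) * Real.exp (-(a * t)) from by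
        refine setIntegral_congr_fun measurableSet_Ioi (fun t ht => ?_); ring, h]
  have hG : Real.Gamma (n : ℝ) = ((n - 1).factorial : ℝ) := by
    obtain ⟨p, rfl⟩ : ∃ p, n = p + 1 := ⟨n - 1, (Nat.succ_pred_eq_of_pos hn).symm⟩
    rw [show ((p + 1 : ℕ) : ℝ) = (p : ℝ) + 1 by push_cast; ring, Real.Gamma_nat_eq_factorial]
    simp
  rw [hG, Real.rpow_natCast, one_div, inv_pow]
  ring


/-- The kernel-bound function `p_{k,ν}^n(r) = ∫₀^∞ s^{n−2} (1+s)^{ν+1−k} e^{−(s+1)r} ds`. -/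
def pFun (n k ν : ℕ) (r : ℝ) : ℝ :=
  ∫ s in Ioi (0 : ℝ),
    s ^ ((n : ℝ) - 2) * (1 + s) ^ ((ν : ℝ) + 1 - (k : ℝ)) * Real.exp (-(s + 1) * r)

/-- For `c, y > 0`, `n ≥ 2` and `k, ν ≥ 0`:
`∫₀^∞ p_{k,ν}^n(c(y+r)) r^{n−1} dr = ((n−1)!/c^n) · p_{k+n,ν}^n(c y)`. -/
theorem stmt7 (n k ν : ℕ) (hn : 2 ≤ n) (c y : ℝ) (hc : 0 < c) (hy : 0 < y) :
    ∫ r in Ioi (0 : ℝ), pFun n k ν (c * (y + r)) * r ^ ((n : ℝ) - 1)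
      = ((n - 1).factorial : ℝ) / c ^ n * pFun n (k + n) ν (c * y) := by
  have hn2 : (2 : ℝ) ≤ (n : ℝ) := by exact_mod_cast hn
  have hA : (0 : ℝ) ≤ (n : ℝ) - 2 := by linarith
  have hslice : ∀ r ∈ Ioi (0 : ℝ), IntegrableOn (fun s : ℝ =>
      s ^ ((n:ℝ)-2) * (1+s) ^ ((ν:ℝ)+1-(k:ℝ)) * Real.exp (-(s+1)*(c*(y+r))) * r ^ ((n:ℝ)-1))
      (Ioi 0) := by
    intro r hr
    have hr0 : 0 < r := hr
    exact (aux_kernel hA (show 0 < c*(y+r) by positivity)).mul_const _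
  have hbound : ∀ r ∈ Ioi (0:ℝ), ∀ s ∈ Ioi (0:ℝ),
      s ^ ((n:ℝ)-2) * (1+s) ^ ((ν:ℝ)+1-(k:ℝ)) * Real.exp (-(s+1)*(c*(y+r))) * r ^ ((n:ℝ)-1)
      ≤ (s ^ ((n:ℝ)-2) * (1+s) ^ ((ν:ℝ)+1-(k:ℝ)) * Real.exp (-(s+1)*(c*y)))
          * (Real.exp (-(c*r)) * r ^ ((n:ℝ)-1)) := by
    intro r hr s hs
    have hr0 : 0 < r := hr
    have hs0 : 0 < s := hs
    have hexp : Real.exp (-(s+1)*(c*(y+r)))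
        = Real.exp (-(s+1)*(c*y)) * Real.exp (-((s+1)*(c*r))) := by
      rw [← Real.exp_add]; ring_nf
    have hle : Real.exp (-((s+1)*(c*r))) ≤ Real.exp (-(c*r)) := by
      apply Real.exp_le_exp.mpr; nlinarith [mul_pos hs0 (mul_pos hc hr0)]
    rw [hexp]
    have h1 : (0:ℝ) ≤ s ^ ((n:ℝ)-2) := Real.rpow_nonneg hs0.le _
    have h2 : (0:ℝ) ≤ (1+s) ^ ((ν:ℝ)+1-(k:ℝ)) := Real.rpow_nonneg (by linarith) _
    have h3 : (0:ℝ) ≤ r ^ ((n:ℝ)-1) := Real.rpow_nonneg hr0.le _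
    have h4 := Real.exp_pos (-(s+1)*(c*y))
    nlinarith [mul_le_mul_of_nonneg_left hle (mul_nonneg (mul_nonneg h1 h2) h4.le),
      mul_le_mul_of_nonneg_right
        (mul_le_mul_of_nonneg_left hle (mul_nonneg (mul_nonneg h1 h2) h4.le)) h3]
  have hInt : Integrable (fun z : ℝ × ℝ =>
      z.2 ^ ((n:ℝ)-2) * (1+z.2) ^ ((ν:ℝ)+1-(k:ℝ)) * Real.exp (-(z.2+1)*(c*(y+z.1)))
        * z.1 ^ ((n:ℝ)-1))
      ((volume.restrict (Ioi 0)).prod (volume.restrict (Ioi 0))) := by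
    have hFmeas : AEStronglyMeasurable (fun z : ℝ × ℝ =>
        z.2 ^ ((n:ℝ)-2) * (1+z.2) ^ ((ν:ℝ)+1-(k:ℝ)) * Real.exp (-(z.2+1)*(c*(y+z.1)))
          * z.1 ^ ((n:ℝ)-1))
        ((volume.restrict (Ioi (0:ℝ))).prod (volume.restrict (Ioi (0:ℝ)))) :=
      Measurable.aestronglyMeasurable (by fun_prop)
    rw [integrable_prod_iff hFmeas]
    constructor
    · filter_upwards [ae_restrict_mem measurableSet_Ioi] with r hr
      have := hslice r hr
      exact this
    · have hG : Integrable (fun r : ℝ =>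
          pFun n k ν (c*y) * (Real.exp (-(c*r)) * r ^ ((n:ℝ)-1))) (volume.restrict (Ioi 0)) := by
        apply Integrable.const_mul
        have := aux_rpow_exp (show (-1:ℝ) < (n:ℝ)-1 by linarith) hc
        exact this.congr_fun (fun x hx => by ring) measurableSet_Ioi
      refine hG.mono' hFmeas.norm.integral_prod_right' ?_
      filter_upwards [ae_restrict_mem measurableSet_Ioi] with r hr
      have hr0 : 0 < r := hr
      rw [Real.norm_eq_abs, abs_of_nonneg (integral_nonneg (fun s => norm_nonneg _))]
      have hint2 : IntegrableOn (fun s : ℝ =>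
          (s ^ ((n:ℝ)-2) * (1+s) ^ ((ν:ℝ)+1-(k:ℝ)) * Real.exp (-(s+1)*(c*y)))
            * (Real.exp (-(c*r)) * r ^ ((n:ℝ)-1))) (Ioi 0) :=
        (aux_kernel hA (by positivity)).mul_const _
      calc (∫ s in Ioi (0:ℝ), ‖s ^ ((n:ℝ)-2) * (1+s) ^ ((ν:ℝ)+1-(k:ℝ))
              * Real.exp (-(s+1)*(c*(y+r))) * r ^ ((n:ℝ)-1)‖)
          ≤ ∫ s in Ioi (0:ℝ), (s ^ ((n:ℝ)-2) * (1+s) ^ ((ν:ℝ)+1-(k:ℝ))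
              * Real.exp (-(s+1)*(c*y))) * (Real.exp (-(c*r)) * r ^ ((n:ℝ)-1)) := by
            refine setIntegral_mono_on (hslice r hr).norm hint2 measurableSet_Ioi
              (fun s hs => ?_)
            have hs0 : 0 < s := hs
            rw [Real.norm_eq_abs, abs_of_nonneg (by positivity)]
            exact hbound r hr s hs
        _ = pFun n k ν (c*y) * (Real.exp (-(c*r)) * r ^ ((n:ℝ)-1)) := by
            rw [pFun]; exact integral_mul_const _ _
  calc ∫ r in Ioi (0 : ℝ), pFun n k ν (c * (y + r)) * r ^ ((n : ℝ) - 1)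
      = ∫ r in Ioi (0:ℝ), ∫ s in Ioi (0:ℝ),
          s ^ ((n:ℝ)-2) * (1+s) ^ ((ν:ℝ)+1-(k:ℝ)) * Real.exp (-(s+1)*(c*(y+r)))
            * r ^ ((n:ℝ)-1) := by
        refine setIntegral_congr_fun measurableSet_Ioi (fun r hr => ?_)
        rw [pFun]; exact (integral_mul_const _ _).symm
    _ = ∫ s in Ioi (0:ℝ), ∫ r in Ioi (0:ℝ),
          s ^ ((n:ℝ)-2) * (1+s) ^ ((ν:ℝ)+1-(k:ℝ)) * Real.exp (-(s+1)*(c*(y+r)))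
            * r ^ ((n:ℝ)-1) :=
        integral_integral_swap hInt
    _ = ∫ s in Ioi (0:ℝ), (s ^ ((n:ℝ)-2) * (1+s) ^ ((ν:ℝ)+1-(k:ℝ))
          * Real.exp (-(s+1)*(c*y))) * (((n-1).factorial : ℝ) / ((1+s)*c) ^ n) := by
        refine setIntegral_congr_fun measurableSet_Ioi (fun s hs => ?_)
        have hs0 : 0 < s := hs
        have ha : 0 < (1+s)*c := by positivity
        rw [show (fun r : ℝ => s ^ ((n:ℝ)-2) * (1+s) ^ ((ν:ℝ)+1-(k:ℝ))
              * Real.exp (-(s+1)*(c*(y+r))) * r ^ ((n:ℝ)-1))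
            = fun r : ℝ => (s ^ ((n:ℝ)-2) * (1+s) ^ ((ν:ℝ)+1-(k:ℝ))
              * Real.exp (-(s+1)*(c*y))) * (Real.exp (-(((1+s)*c)*r)) * r ^ ((n:ℝ)-1)) from
          funext fun r => by
            rw [show Real.exp (-(s+1)*(c*(y+r)))
                = Real.exp (-(s+1)*(c*y)) * Real.exp (-(((1+s)*c)*r)) from by
              rw [← Real.exp_add]; ring_nf]
            ring]
        rw [integral_const_mul, aux_gamma n (by omega) ha]
    _ = ((n-1).factorial : ℝ) / c ^ n * ∫ s in Ioi (0:ℝ),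
          s ^ ((n:ℝ)-2) * (1+s) ^ ((ν:ℝ)+1-((k+n : ℕ):ℝ)) * Real.exp (-(s+1)*(c*y)) := by
        rw [← integral_const_mul]
        refine setIntegral_congr_fun measurableSet_Ioi (fun s hs => ?_)
        have hs0 : 0 < s := hs
        have h1s : (0:ℝ) < 1 + s := by linarith
        have key : (1+s) ^ ((ν:ℝ)+1-((k+n : ℕ):ℝ))
            = (1+s) ^ ((ν:ℝ)+1-(k:ℝ)) / (1+s) ^ (n : ℕ) := by
          rw [← Real.rpow_natCast (1+s) n, ← Real.rpow_sub h1s]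
          congr 1; push_cast; ring
        rw [key, mul_pow]
        have hne1 : ((1+s):ℝ) ^ (n:ℕ) ≠ 0 := by positivity
        have hne2 : c ^ n ≠ 0 := by positivity
        field_simp
    _ = ((n - 1).factorial : ℝ) / c ^ n * pFun n (k + n) ν (c * y) := by rw [pFun]

end
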